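/- arXiv:1703.07120 — 2 statements merged into one kernel-verified Lean document; each statement's English description precedes it below -/
import Mathlib

section
/- (Norm bound for PFASST with pre-smoothing.) Assume Q, Q_Δ, A, Q̃_Δ and Ã are invertible. Then for every integer k ≥ 1 there exist constants c > 0, c' > 0 and μ* > 0 such that for all μ ≥ μ*, the PFASST iteration matrix with k pre-smoothing steps, T(μ,k) = ( C(μ)^{-1} − T_C^F P̃(μ)^{-1} T_F^C ) · C(μ) · T_S(μ)^k, satisfies ‖T(μ,k)‖ ≤ c · ‖ I_L ⊗ (I_M − Q_Δ^{-1} Q)^k ⊗ I_N ‖ + c'/μ. In particular, if additionally (I_M − Q_Δ^{-1} Q)^M = 0 and k ≥ M, then ‖T(μ,k)‖ ≤ c'/μ, which tends to zero as μ → ∞. -/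
/-!
STATEMENT 16 (Norm bound for PFASST with pre-smoothing): Assume Q, Q_Δ, A, Q̃_Δ
and Ã are invertible. Then for every k ≥ 1 there exist c > 0, c' > 0 and μ* > 0
such that for all μ ≥ μ*, the PFASST iteration matrix with k pre-smoothing steps
T(μ,k) = (C(μ)⁻¹ − T_C^F P̃(μ)⁻¹ T_F^C) · C(μ) · T_S(μ)^k satisfies
‖T(μ,k)‖ ≤ c ‖I_L ⊗ (I_M − Q_Δ⁻¹Q)^k ⊗ I_N‖ + c'/μ. In particular, if additionally
(I_M − Q_Δ⁻¹Q)^M = 0 and k ≥ M, then ‖T(μ,k)‖ ≤ c'/μ.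
-/

noncomputable section

open Matrix
open scoped Kronecker

/-- Complexification of a real matrix. -/
def cmplx {m n : Type*} (A : Matrix m n ℝ) : Matrix m n ℂ := A.map (fun x => (x : ℂ))

/-- The matrix `E` with ones on the first subdiagonal and zeros elsewhere. -/
def Emat (L : ℕ) : Matrix (Fin L) (Fin L) ℂ :=
  Matrix.of fun i j => if (i : ℕ) = (j : ℕ) + 1 then 1 else 0

/-- The matrix `N_M` whose last column consists of ones, all other entries zero. -/
def Nmat (M : ℕ) : Matrix (Fin M) (Fin M) ℂ :=
  Matrix.of fun _ j => if (j : ℕ) = M - 1 then 1 else 0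

/-- `H = N_M ⊗ I_N`. -/
def Hmat (M N : ℕ) : Matrix (Fin M × Fin N) (Fin M × Fin N) ℂ :=
  Nmat M ⊗ₖ (1 : Matrix (Fin N) (Fin N) ℂ)

/-- `E ⊗ H`. -/
def EH (L M N : ℕ) : Matrix (Fin L × Fin M × Fin N) (Fin L × Fin M × Fin N) ℂ :=
  Emat L ⊗ₖ Hmat M N

/-- The composite collocation matrix `C(μ) = I − μ (I_L ⊗ Q ⊗ A) − E ⊗ H`. -/
def Cmat (L : ℕ) {M N : ℕ} (Q : Matrix (Fin M) (Fin M) ℝ) (A : Matrix (Fin N) (Fin N) ℂ)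
    (μ : ℝ) : Matrix (Fin L × Fin M × Fin N) (Fin L × Fin M × Fin N) ℂ :=
  1 - (μ : ℂ) • ((1 : Matrix (Fin L) (Fin L) ℂ) ⊗ₖ (cmplx Q ⊗ₖ A)) - EH L M N

/-- The approximative block Jacobi preconditioner `P̂(μ) = I − μ (I_L ⊗ Q_Δ ⊗ A)`. -/
def Phat (L : ℕ) {M N : ℕ} (QΔ : Matrix (Fin M) (Fin M) ℝ) (A : Matrix (Fin N) (Fin N) ℂ)
    (μ : ℝ) : Matrix (Fin L × Fin M × Fin N) (Fin L × Fin M × Fin N) ℂ :=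
  1 - (μ : ℂ) • ((1 : Matrix (Fin L) (Fin L) ℂ) ⊗ₖ (cmplx QΔ ⊗ₖ A))

/-- The smoother iteration matrix `T_S(μ) = I − P̂(μ)⁻¹ C(μ)`. -/
def Tsmooth (L : ℕ) {M N : ℕ} (Q QΔ : Matrix (Fin M) (Fin M) ℝ)
    (A : Matrix (Fin N) (Fin N) ℂ) (μ : ℝ) :
    Matrix (Fin L × Fin M × Fin N) (Fin L × Fin M × Fin N) ℂ :=
  1 - (Phat L QΔ A μ)⁻¹ * Cmat L Q A μ

/-- Restriction operator `T_F^C = I_L ⊗ T_{F,Q}^C ⊗ T_{F,A}^C`. -/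
def TFCmat (L : ℕ) {M N M' N' : ℕ} (TFQ : Matrix (Fin M') (Fin M) ℝ)
    (TFA : Matrix (Fin N') (Fin N) ℂ) :
    Matrix (Fin L × Fin M' × Fin N') (Fin L × Fin M × Fin N) ℂ :=
  (1 : Matrix (Fin L) (Fin L) ℂ) ⊗ₖ (cmplx TFQ ⊗ₖ TFA)

/-- Interpolation operator `T_C^F = I_L ⊗ T_{C,Q}^F ⊗ T_{C,A}^F`. -/
def TCFmat (L : ℕ) {M N M' N' : ℕ} (TCQ : Matrix (Fin M) (Fin M') ℝ)
    (TCA : Matrix (Fin N) (Fin N') ℂ) :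
    Matrix (Fin L × Fin M × Fin N) (Fin L × Fin M' × Fin N') ℂ :=
  (1 : Matrix (Fin L) (Fin L) ℂ) ⊗ₖ (cmplx TCQ ⊗ₖ TCA)

/-- The coarse approximative block Gauss-Seidel preconditioner
`P̃(μ) = I − μ (I_L ⊗ Q̃_Δ ⊗ Ã) − E ⊗ H̃`. -/
def Ptilde (L : ℕ) {M' N' : ℕ} (QΔt : Matrix (Fin M') (Fin M') ℝ)
    (At : Matrix (Fin N') (Fin N') ℂ) (μ : ℝ) :
    Matrix (Fin L × Fin M' × Fin N') (Fin L × Fin M' × Fin N') ℂ :=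
  1 - (μ : ℂ) • ((1 : Matrix (Fin L) (Fin L) ℂ) ⊗ₖ (cmplx QΔt ⊗ₖ At)) - EH L M' N'

/-- The coarse-grid correction iteration matrix
`T_CGC(μ) = I − T_C^F P̃(μ)⁻¹ T_F^C C(μ)`. -/
def Tcgc (L : ℕ) {M N M' N' : ℕ} (Q : Matrix (Fin M) (Fin M) ℝ)
    (A : Matrix (Fin N) (Fin N) ℂ)
    (QΔt : Matrix (Fin M') (Fin M') ℝ) (At : Matrix (Fin N') (Fin N') ℂ)
    (TFQ : Matrix (Fin M') (Fin M) ℝ) (TFA : Matrix (Fin N') (Fin N) ℂ)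
    (TCQ : Matrix (Fin M) (Fin M') ℝ) (TCA : Matrix (Fin N) (Fin N') ℂ) (μ : ℝ) :
    Matrix (Fin L × Fin M × Fin N) (Fin L × Fin M × Fin N) ℂ :=
  1 - TCFmat L TCQ TCA * (Ptilde L QΔt At μ)⁻¹ * TFCmat L TFQ TFA * Cmat L Q A μ

/-- The operator norm induced by the Euclidean vector norm. -/
def opNorm {n : Type*} [Fintype n] [DecidableEq n] (A : Matrix n n ℂ) : ℝ :=
  ‖Matrix.toEuclideanCLM (𝕜 := ℂ) A‖

section PfasstAux

open Matrix
open scoped Kronecker Matrix.Norms.L2Operator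

variable {R : Type*} [NormedRing R] [CompleteSpace R] [NormedAlgebra ℂ R]

omit [CompleteSpace R] [NormedAlgebra ℂ R] in
lemma pf_inv_norm_le_two (h1 : ‖(1:R)‖ ≤ 1) {z v : R} (hz : ‖z‖ ≤ 1/2)
    (hv : v * (1 - z) = 1) : ‖v‖ ≤ 2 := by
  rw [mul_sub, mul_one] at hv
  have hv' : v = 1 + v * z := eq_add_of_sub_eq hv
  have h2 : ‖v * z‖ ≤ ‖v‖ * ‖z‖ := norm_mul_le _ _
  have h3 : ‖v‖ * ‖z‖ ≤ ‖v‖ * (1/2) := mul_le_mul_of_nonneg_left hz (norm_nonneg v)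
  have h4 : ‖v‖ ≤ ‖(1:R)‖ + ‖v * z‖ := by
    conv_lhs => rw [hv']
    exact norm_add_le _ _
  linarith

lemma pf_shifted_unit (h1 : ‖(1:R)‖ ≤ 1) (u : Rˣ) (b : R) (μ : ℝ) (hμ1 : 1 ≤ μ)
    (hμ2 : 2 * ‖(↑u⁻¹ : R) * b‖ ≤ μ) :
    ∃ w : Rˣ, (↑w : R) = b - (μ : ℂ) • (↑u : R) ∧
      ‖(↑w⁻¹ : R)‖ ≤ 2 * ‖(↑u⁻¹ : R)‖ / μ := by
  have hμ0 : (0:ℝ) < μ := lt_of_lt_of_le one_pos hμ1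
  have hμc : (μ : ℂ) ≠ 0 := by exact_mod_cast hμ0.ne'
  set z : R := ((μ : ℂ))⁻¹ • ((↑u⁻¹ : R) * b) with hzdef
  have hznorm : ‖z‖ ≤ 1/2 := by
    rw [hzdef, norm_smul, norm_inv, Complex.norm_real, Real.norm_eq_abs, abs_of_pos hμ0,
      inv_mul_le_iff₀ hμ0]
    linarith
  have hz1 : ‖z‖ < 1 := lt_of_le_of_lt hznorm (by norm_num)
  set s : Rˣ := Units.oneSub z hz1 with hs
  have hsval : (↑s : R) = 1 - z := rfl
  have hsinv : ‖(↑s⁻¹ : R)‖ ≤ 2 :=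
    pf_inv_norm_le_two h1 hznorm (by rw [← hsval]; exact s.inv_mul)
  have key : (↑u : R) * (1 - z) = ↑u - ((μ:ℂ))⁻¹ • b := by
    rw [mul_sub, mul_one, hzdef, mul_smul_comm, ← mul_assoc, u.mul_inv, one_mul]
  have hval : b - (μ:ℂ) • (↑u : R) = (-(μ:ℂ)) • ((↑u : R) * (1 - z)) := by
    rw [key, smul_sub, smul_smul]
    have : (-(μ:ℂ)) * ((μ:ℂ))⁻¹ = -1 := by field_simp
    rw [this, neg_one_smul, neg_smul, sub_neg_eq_add]
    abel
  refine ⟨⟨b - (μ:ℂ) • (↑u : R), (-(μ:ℂ))⁻¹ • ((↑s⁻¹ : R) * ↑u⁻¹), ?_, ?_⟩, rfl, ?_⟩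
  · rw [hval, smul_mul_smul_comm, mul_inv_cancel₀ (neg_ne_zero.2 hμc), one_smul,
      ← hsval, mul_assoc, ← mul_assoc (↑s : R), s.mul_inv, one_mul, u.mul_inv]
  · rw [hval, smul_mul_smul_comm, inv_mul_cancel₀ (neg_ne_zero.2 hμc), one_smul,
      ← hsval, mul_assoc, ← mul_assoc (↑u⁻¹ : R), u.inv_mul, one_mul, s.inv_mul]
  · show ‖(-(μ:ℂ))⁻¹ • ((↑s⁻¹ : R) * ↑u⁻¹)‖ ≤ _
    rw [norm_smul, norm_inv, norm_neg, Complex.norm_real, Real.norm_eq_abs, abs_of_pos hμ0]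
    have h5 : ‖(↑s⁻¹ : R) * ↑u⁻¹‖ ≤ 2 * ‖(↑u⁻¹ : R)‖ :=
      le_trans (norm_mul_le _ _) (mul_le_mul_of_nonneg_right hsinv (norm_nonneg _))
    rw [div_eq_inv_mul]
    exact mul_le_mul_of_nonneg_left h5 (by positivity)

lemma pf_shifted_unit' (h1 : ‖(1:R)‖ ≤ 1) {u ui : R} (b : R)
    (hu : u * ui = 1) (hui : ui * u = 1) (μ : ℝ) (hμ1 : 1 ≤ μ)
    (hμ2 : 2 * ‖ui * b‖ ≤ μ) :
    ∃ w : Rˣ, (↑w : R) = b - (μ : ℂ) • u ∧ ‖(↑w⁻¹ : R)‖ ≤ 2 * ‖ui‖ / μ :=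
  pf_shifted_unit h1 ⟨u, ui, hu, hui⟩ b μ hμ1 hμ2

omit [CompleteSpace R] [NormedAlgebra ℂ R] in
lemma pf_norm_pow_le (h1 : ‖(1:R)‖ ≤ 1) {b : R} {b0 : ℝ} (hb0 : 1 ≤ b0) (hb : ‖b‖ ≤ b0) :
    ∀ n : ℕ, ‖b ^ n‖ ≤ b0 ^ n := by
  intro n
  induction n with
  | zero => simpa using h1
  | succ n ih =>
    calc ‖b ^ (n+1)‖ = ‖b * b ^ n‖ := by rw [pow_succ']
    _ ≤ ‖b‖ * ‖b ^ n‖ := norm_mul_le _ _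
    _ ≤ b0 * b0 ^ n :=
        mul_le_mul hb ih (norm_nonneg _) (le_trans zero_le_one hb0)
    _ = b0 ^ (n+1) := (pow_succ' b0 n).symm

omit [CompleteSpace R] [NormedAlgebra ℂ R] in
lemma pf_pow_sub_pow (h1 : ‖(1:R)‖ ≤ 1) {a b : R} {b0 ε : ℝ} (hb0 : 1 ≤ b0)
    (ha : ‖a‖ ≤ b0) (hb : ‖b‖ ≤ b0) (hab : ‖a - b‖ ≤ ε) (hε : 0 ≤ ε) :
    ∀ n : ℕ, ‖a ^ n - b ^ n‖ ≤ n * b0 ^ n * ε := by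
  intro n
  have hb00 : (0:ℝ) ≤ b0 := le_trans zero_le_one hb0
  induction n with
  | zero => simp
  | succ n ih =>
    have hid : a ^ (n+1) - b ^ (n+1) = a * (a ^ n - b ^ n) + (a - b) * b ^ n := by
      rw [mul_sub, sub_mul, pow_succ', pow_succ']
      abel
    have hbn : ‖b ^ n‖ ≤ b0 ^ n := pf_norm_pow_le h1 hb0 hb n
    have h2 : ‖a ^ (n+1) - b ^ (n+1)‖ ≤ b0 * (n * b0 ^ n * ε) + ε * b0 ^ n := by
      rw [hid]
      refine le_trans (norm_add_le _ _) (add_le_add ?_ ?_)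
      · exact le_trans (norm_mul_le _ _) (mul_le_mul ha ih (norm_nonneg _) hb00)
      · exact le_trans (norm_mul_le _ _) (mul_le_mul hab hbn (norm_nonneg _) hε)
    have hpow : b0 ^ n ≤ b0 ^ (n+1) := pow_le_pow_right₀ hb0 (Nat.le_succ n)
    have h3 : ε * b0 ^ n ≤ ε * b0 ^ (n+1) := mul_le_mul_of_nonneg_left hpow hε
    have h4 : b0 * (↑n * b0 ^ n * ε) = ↑n * b0 ^ (n+1) * ε := by ring
    push_cast
    nlinarith [pow_nonneg hb00 (n+1)]

lemma cmplx_mul {m n p : Type*} [Fintype n] (A : Matrix m n ℝ) (B : Matrix n p ℝ) :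
    cmplx (A * B) = cmplx A * cmplx B := by
  ext i j
  simp only [cmplx, Matrix.map_apply, Matrix.mul_apply]
  push_cast
  ring

lemma cmplx_one {m : Type*} [Fintype m] [DecidableEq m] :
    cmplx (1 : Matrix m m ℝ) = 1 := by
  ext i j
  simp [cmplx, Matrix.map_apply, Matrix.one_apply, apply_ite]

lemma cmplx_sub {m n : Type*} (A B : Matrix m n ℝ) :
    cmplx (A - B) = cmplx A - cmplx B := by
  ext i j
  simp [cmplx, Matrix.map_apply, Matrix.sub_apply]

lemma cmplx_zero {m n : Type*} : cmplx (0 : Matrix m n ℝ) = 0 := by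
  ext i j
  simp [cmplx, Matrix.map_apply]

lemma cmplx_pow {m : Type*} [Fintype m] [DecidableEq m] (X : Matrix m m ℝ) (k : ℕ) :
    cmplx (X ^ k) = cmplx X ^ k := by
  induction k with
  | zero => simpa using cmplx_one
  | succ n ih => rw [pow_succ, pow_succ, cmplx_mul, ih]

lemma kron3_mul {L M N : ℕ} (X X' : Matrix (Fin M) (Fin M) ℂ)
    (Y Y' : Matrix (Fin N) (Fin N) ℂ) :
    ((1 : Matrix (Fin L) (Fin L) ℂ) ⊗ₖ (X ⊗ₖ Y)) *
      ((1 : Matrix (Fin L) (Fin L) ℂ) ⊗ₖ (X' ⊗ₖ Y')) =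
      (1 : Matrix (Fin L) (Fin L) ℂ) ⊗ₖ ((X * X') ⊗ₖ (Y * Y')) := by
  rw [← Matrix.mul_kronecker_mul, one_mul, ← Matrix.mul_kronecker_mul]

lemma kron3_one {L M N : ℕ} :
    (1 : Matrix (Fin L) (Fin L) ℂ) ⊗ₖ
      ((1 : Matrix (Fin M) (Fin M) ℂ) ⊗ₖ (1 : Matrix (Fin N) (Fin N) ℂ)) = 1 := by
  rw [Matrix.one_kronecker_one, Matrix.one_kronecker_one]

lemma kron3_pow {L M N : ℕ} (X : Matrix (Fin M) (Fin M) ℂ) (k : ℕ) :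
    ((1 : Matrix (Fin L) (Fin L) ℂ) ⊗ₖ (X ⊗ₖ (1 : Matrix (Fin N) (Fin N) ℂ))) ^ k =
      (1 : Matrix (Fin L) (Fin L) ℂ) ⊗ₖ ((X ^ k) ⊗ₖ (1 : Matrix (Fin N) (Fin N) ℂ)) := by
  induction k with
  | zero => simp only [pow_zero, kron3_one]
  | succ n ih => rw [pow_succ, ih, kron3_mul, mul_one, ← pow_succ]

lemma kron3_sub {L M N : ℕ} (X Y : Matrix (Fin M) (Fin M) ℂ) :
    (1 : Matrix (Fin L) (Fin L) ℂ) ⊗ₖ ((X - Y) ⊗ₖ (1 : Matrix (Fin N) (Fin N) ℂ)) =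
      (1 : Matrix (Fin L) (Fin L) ℂ) ⊗ₖ (X ⊗ₖ (1 : Matrix (Fin N) (Fin N) ℂ)) -
      (1 : Matrix (Fin L) (Fin L) ℂ) ⊗ₖ (Y ⊗ₖ (1 : Matrix (Fin N) (Fin N) ℂ)) := by
  ext i j
  simp only [Matrix.kroneckerMap_apply, Matrix.sub_apply]
  ring

end PfasstAux


set_option maxHeartbeats 1000000 in
open scoped Matrix.Norms.L2Operator in
theorem stmt_16 (L M N M' N' : ℕ) (hL : 0 < L) (hM : 0 < M) (hN : 0 < N)
    (hM' : 0 < M') (hN' : 0 < N')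
    (Q QΔ : Matrix (Fin M) (Fin M) ℝ) (A : Matrix (Fin N) (Fin N) ℂ)
    (QΔt : Matrix (Fin M') (Fin M') ℝ) (At : Matrix (Fin N') (Fin N') ℂ)
    (TFQ : Matrix (Fin M') (Fin M) ℝ) (TFA : Matrix (Fin N') (Fin N) ℂ)
    (TCQ : Matrix (Fin M) (Fin M') ℝ) (TCA : Matrix (Fin N) (Fin N') ℂ)
    (hQ : IsUnit Q) (hQΔ : IsUnit QΔ) (hA : IsUnit A)
    (hQΔt : IsUnit QΔt) (hAt : IsUnit At)
    (k : ℕ) (hk : 1 ≤ k) :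
    ∃ c > (0 : ℝ), ∃ c' > (0 : ℝ), ∃ μs > (0 : ℝ), ∀ μ : ℝ, μs ≤ μ →
      IsUnit (Cmat L Q A μ) ∧ IsUnit (Phat L QΔ A μ) ∧ IsUnit (Ptilde L QΔt At μ) ∧
      opNorm (((Cmat L Q A μ)⁻¹ -
            TCFmat L TCQ TCA * (Ptilde L QΔt At μ)⁻¹ * TFCmat L TFQ TFA) *
          Cmat L Q A μ * (Tsmooth L Q QΔ A μ) ^ k) ≤
        c * opNorm ((1 : Matrix (Fin L) (Fin L) ℂ) ⊗ₖ
            (cmplx (((1 : Matrix (Fin M) (Fin M) ℝ) - QΔ⁻¹ * Q) ^ k) ⊗ₖ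
              (1 : Matrix (Fin N) (Fin N) ℂ))) + c' / μ ∧
      (((1 : Matrix (Fin M) (Fin M) ℝ) - QΔ⁻¹ * Q) ^ M = 0 → M ≤ k →
        opNorm (((Cmat L Q A μ)⁻¹ -
              TCFmat L TCQ TCA * (Ptilde L QΔt At μ)⁻¹ * TFCmat L TFQ TFA) *
            Cmat L Q A μ * (Tsmooth L Q QΔ A μ) ^ k) ≤ c' / μ) := by
  classical
  haveI : CompleteSpace (Matrix (Fin L × Fin M × Fin N) (Fin L × Fin M × Fin N) ℂ) :=
    FiniteDimensional.complete ℂ _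
  haveI : CompleteSpace (Matrix (Fin L × Fin M' × Fin N') (Fin L × Fin M' × Fin N') ℂ) :=
    FiniteDimensional.complete ℂ _
  have hopN : ∀ X : Matrix (Fin L × Fin M × Fin N) (Fin L × Fin M × Fin N) ℂ,
      opNorm X = ‖X‖ := fun _ => rfl
  have h1C : ‖(1 : Matrix (Fin L × Fin M × Fin N) (Fin L × Fin M × Fin N) ℂ)‖ ≤ 1 := by
    rw [Matrix.cstar_norm_def, _root_.map_one]
    exact ContinuousLinearMap.norm_id_le
  have h1T : ‖(1 : Matrix (Fin L × Fin M' × Fin N') (Fin L × Fin M' × Fin N') ℂ)‖ ≤ 1 := by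
    rw [Matrix.cstar_norm_def, _root_.map_one]
    exact ContinuousLinearMap.norm_id_le
  have hQd := (Matrix.isUnit_iff_isUnit_det Q).mp hQ
  have hQΔd := (Matrix.isUnit_iff_isUnit_det QΔ).mp hQΔ
  have hAd := (Matrix.isUnit_iff_isUnit_det A).mp hA
  have hQΔtd := (Matrix.isUnit_iff_isUnit_det QΔt).mp hQΔt
  have hAtd := (Matrix.isUnit_iff_isUnit_det At).mp hAt
  set uC : Matrix (Fin L × Fin M × Fin N) (Fin L × Fin M × Fin N) ℂ :=
    (1 : Matrix (Fin L) (Fin L) ℂ) ⊗ₖ (cmplx Q ⊗ₖ A) with huCdef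
  set uCi : Matrix (Fin L × Fin M × Fin N) (Fin L × Fin M × Fin N) ℂ :=
    (1 : Matrix (Fin L) (Fin L) ℂ) ⊗ₖ (cmplx Q⁻¹ ⊗ₖ A⁻¹) with huCidef
  set uP : Matrix (Fin L × Fin M × Fin N) (Fin L × Fin M × Fin N) ℂ :=
    (1 : Matrix (Fin L) (Fin L) ℂ) ⊗ₖ (cmplx QΔ ⊗ₖ A) with huPdef
  set uPi : Matrix (Fin L × Fin M × Fin N) (Fin L × Fin M × Fin N) ℂ :=
    (1 : Matrix (Fin L) (Fin L) ℂ) ⊗ₖ (cmplx QΔ⁻¹ ⊗ₖ A⁻¹) with huPidef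
  set uT : Matrix (Fin L × Fin M' × Fin N') (Fin L × Fin M' × Fin N') ℂ :=
    (1 : Matrix (Fin L) (Fin L) ℂ) ⊗ₖ (cmplx QΔt ⊗ₖ At) with huTdef
  set uTi : Matrix (Fin L × Fin M' × Fin N') (Fin L × Fin M' × Fin N') ℂ :=
    (1 : Matrix (Fin L) (Fin L) ℂ) ⊗ₖ (cmplx QΔt⁻¹ ⊗ₖ At⁻¹) with huTidef
  set bC : Matrix (Fin L × Fin M × Fin N) (Fin L × Fin M × Fin N) ℂ :=
    (1 : Matrix (Fin L × Fin M × Fin N) (Fin L × Fin M × Fin N) ℂ) - EH L M N with hbCdef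
  set bT : Matrix (Fin L × Fin M' × Fin N') (Fin L × Fin M' × Fin N') ℂ :=
    (1 : Matrix (Fin L × Fin M' × Fin N') (Fin L × Fin M' × Fin N') ℂ) - EH L M' N' with hbTdef
  set Bm : Matrix (Fin L × Fin M × Fin N) (Fin L × Fin M × Fin N) ℂ :=
    (1 : Matrix (Fin L) (Fin L) ℂ) ⊗ₖ
      (cmplx ((1 : Matrix (Fin M) (Fin M) ℝ) - QΔ⁻¹ * Q) ⊗ₖ
        (1 : Matrix (Fin N) (Fin N) ℂ)) with hBmdef
  clear_value uC uCi uP uPi uT uTi bC bT Bm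
  have huC1 : uC * uCi = 1 := by
    rw [huCdef, huCidef, kron3_mul, ← cmplx_mul, Matrix.mul_nonsing_inv Q hQd,
      Matrix.mul_nonsing_inv A hAd, cmplx_one, kron3_one]
  have huC2 : uCi * uC = 1 := by
    rw [huCdef, huCidef, kron3_mul, ← cmplx_mul, Matrix.nonsing_inv_mul Q hQd,
      Matrix.nonsing_inv_mul A hAd, cmplx_one, kron3_one]
  have huP1 : uP * uPi = 1 := by
    rw [huPdef, huPidef, kron3_mul, ← cmplx_mul, Matrix.mul_nonsing_inv QΔ hQΔd,
      Matrix.mul_nonsing_inv A hAd, cmplx_one, kron3_one]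
  have huP2 : uPi * uP = 1 := by
    rw [huPdef, huPidef, kron3_mul, ← cmplx_mul, Matrix.nonsing_inv_mul QΔ hQΔd,
      Matrix.nonsing_inv_mul A hAd, cmplx_one, kron3_one]
  have huT1 : uT * uTi = 1 := by
    rw [huTdef, huTidef, kron3_mul, ← cmplx_mul, Matrix.mul_nonsing_inv QΔt hQΔtd,
      Matrix.mul_nonsing_inv At hAtd, cmplx_one, kron3_one]
  have huT2 : uTi * uT = 1 := by
    rw [huTdef, huTidef, kron3_mul, ← cmplx_mul, Matrix.nonsing_inv_mul QΔt hQΔtd,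
      Matrix.nonsing_inv_mul At hAtd, cmplx_one, kron3_one]
  have hBm : Bm = 1 - uPi * uC := by
    rw [hBmdef, huPidef, huCdef, kron3_mul, ← cmplx_mul, Matrix.nonsing_inv_mul A hAd,
      cmplx_sub, cmplx_one, kron3_sub, kron3_one]
  -- the constants
  have hnn1 : (0:ℝ) ≤ ‖uCi * bC‖ := norm_nonneg _
  have hnn2 : (0:ℝ) ≤ ‖uPi‖ := norm_nonneg _
  have hnn3 : (0:ℝ) ≤ ‖uTi * bT‖ := norm_nonneg _
  set K1 : ℝ := 2 * ‖uPi‖ * ‖uPi * uC - bC‖ with hK1def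
  have hK10 : 0 ≤ K1 := by
    rw [hK1def]
    exact mul_nonneg (mul_nonneg (by norm_num) (norm_nonneg _)) (norm_nonneg _)
  set b0 : ℝ := ‖Bm‖ + K1 + 1 with hb0def
  have hb01 : 1 ≤ b0 := by
    rw [hb0def]
    linarith [norm_nonneg Bm]
  set g : ℝ := 1 + ‖TCFmat L TCQ TCA‖ * ‖TFCmat L TFQ TFA‖ * (2 * ‖uTi‖) *
      (‖bC‖ + ‖uC‖) with hgdef
  have hg1 : 1 ≤ g := by
    rw [hgdef]
    have h5 : (0:ℝ) ≤ ‖TCFmat L TCQ TCA‖ * ‖TFCmat L TFQ TFA‖ * (2 * ‖uTi‖) *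
        (‖bC‖ + ‖uC‖) :=
      mul_nonneg (mul_nonneg (mul_nonneg (norm_nonneg _) (norm_nonneg _))
        (mul_nonneg (by norm_num) (norm_nonneg _)))
        (add_nonneg (norm_nonneg _) (norm_nonneg _))
    linarith
  clear_value K1 b0 g
  have hb00 : (0:ℝ) ≤ b0 := by linarith
  have hc'0 : (0:ℝ) ≤ g * (↑k * b0 ^ k * K1) :=
    mul_nonneg (by linarith)
      (mul_nonneg (mul_nonneg (Nat.cast_nonneg k) (pow_nonneg hb00 k)) hK10)
  refine ⟨g, by linarith, g * (↑k * b0 ^ k * K1) + 1, by linarith,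
    1 + 2 * (‖uCi * bC‖ + ‖uPi‖ + ‖uTi * bT‖), by linarith, ?_⟩
  intro μ hμ
  have hμ1 : 1 ≤ μ := by linarith
  have hμ0 : (0:ℝ) < μ := by linarith
  obtain ⟨wC, hwCval, hwCinv⟩ :=
    pf_shifted_unit' h1C bC huC1 huC2 μ hμ1 (by linarith)
  obtain ⟨wP, hwPval, hwPinv⟩ :=
    pf_shifted_unit' h1C (1 : Matrix (Fin L × Fin M × Fin N) (Fin L × Fin M × Fin N) ℂ)
      huP1 huP2 μ hμ1 (by rw [mul_one]; linarith)
  obtain ⟨wT, hwTval, hwTinv⟩ :=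
    pf_shifted_unit' h1T bT huT1 huT2 μ hμ1 (by linarith)
  -- identifications
  have hCbc : Cmat L Q A μ = bC - (μ:ℂ) • uC := by
    rw [hbCdef, huCdef]
    simp only [Cmat]
    rw [sub_right_comm]
  have hCeq : Cmat L Q A μ = (↑wC : Matrix (Fin L × Fin M × Fin N) (Fin L × Fin M × Fin N) ℂ) := by
    rw [hCbc, hwCval]
  have hCunit : IsUnit (Cmat L Q A μ) := by rw [hCeq]; exact wC.isUnit
  have hCd : IsUnit (Cmat L Q A μ).det := (Matrix.isUnit_iff_isUnit_det _).mp hCunit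
  have hPeq : Phat L QΔ A μ = (↑wP : Matrix (Fin L × Fin M × Fin N) (Fin L × Fin M × Fin N) ℂ) := by
    rw [hwPval, huPdef]
    simp only [Phat]
  have hPunit : IsUnit (Phat L QΔ A μ) := by rw [hPeq]; exact wP.isUnit
  have hTeq : Ptilde L QΔt At μ =
      (↑wT : Matrix (Fin L × Fin M' × Fin N') (Fin L × Fin M' × Fin N') ℂ) := by
    rw [hwTval, hbTdef, huTdef]
    simp only [Ptilde]
    rw [sub_right_comm]
  have hTunit : IsUnit (Ptilde L QΔt At μ) := by rw [hTeq]; exact wT.isUnit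
  have hPinv : (Phat L QΔ A μ)⁻¹ =
      (↑wP⁻¹ : Matrix (Fin L × Fin M × Fin N) (Fin L × Fin M × Fin N) ℂ) := by
    rw [hPeq, ← Matrix.coe_units_inv]
  have hTinv : (Ptilde L QΔt At μ)⁻¹ =
      (↑wT⁻¹ : Matrix (Fin L × Fin M' × Fin N') (Fin L × Fin M' × Fin N') ℂ) := by
    rw [hTeq, ← Matrix.coe_units_inv]
  -- smoother asymptotics
  have e1 : (↑wP : Matrix (Fin L × Fin M × Fin N) (Fin L × Fin M × Fin N) ℂ) * (uPi * uC) =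
      uPi * uC - (μ:ℂ) • uC := by
    rw [hwPval, sub_mul, one_mul, smul_mul_assoc, ← mul_assoc, huP1, one_mul]
  have e2 : uPi * uC =
      (↑wP⁻¹ : Matrix (Fin L × Fin M × Fin N) (Fin L × Fin M × Fin N) ℂ) *
        (uPi * uC - (μ:ℂ) • uC) := by
    rw [← e1, ← mul_assoc, Units.inv_mul, one_mul]
  have e2' : (↑wP⁻¹ : Matrix (Fin L × Fin M × Fin N) (Fin L × Fin M × Fin N) ℂ) * (uPi * uC) =
      uPi * uC + (↑wP⁻¹ : Matrix (Fin L × Fin M × Fin N) (Fin L × Fin M × Fin N) ℂ) *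
        ((μ:ℂ) • uC) := by
    rw [mul_sub] at e2
    exact sub_eq_iff_eq_add.mp e2.symm
  have e3 : Tsmooth L Q QΔ A μ - Bm =
      (↑wP⁻¹ : Matrix (Fin L × Fin M × Fin N) (Fin L × Fin M × Fin N) ℂ) *
        (uPi * uC - bC) := by
    simp only [Tsmooth]
    rw [hPinv, hCbc, hBm, mul_sub, mul_sub, e2']
    abel
  have hTsBm : ‖Tsmooth L Q QΔ A μ - Bm‖ ≤ K1 / μ := by
    rw [e3]
    calc ‖(↑wP⁻¹ : Matrix (Fin L × Fin M × Fin N) (Fin L × Fin M × Fin N) ℂ) *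
          (uPi * uC - bC)‖
        ≤ ‖(↑wP⁻¹ : Matrix (Fin L × Fin M × Fin N) (Fin L × Fin M × Fin N) ℂ)‖ *
            ‖uPi * uC - bC‖ := norm_mul_le _ _
      _ ≤ (2 * ‖uPi‖ / μ) * ‖uPi * uC - bC‖ :=
          mul_le_mul_of_nonneg_right hwPinv (norm_nonneg _)
      _ = K1 / μ := by rw [hK1def]; ring
  have hK1μ : K1 / μ ≤ K1 := div_le_self hK10 hμ1
  have hTsn : ‖Tsmooth L Q QΔ A μ‖ ≤ b0 := by
    have hh : Tsmooth L Q QΔ A μ = Bm + (Tsmooth L Q QΔ A μ - Bm) := by abel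
    have h9 : ‖Tsmooth L Q QΔ A μ‖ ≤ ‖Bm‖ + ‖Tsmooth L Q QΔ A μ - Bm‖ := by
      calc ‖Tsmooth L Q QΔ A μ‖ = ‖Bm + (Tsmooth L Q QΔ A μ - Bm)‖ := by rw [← hh]
      _ ≤ _ := norm_add_le _ _
    rw [hb0def]
    linarith
  have hBmn : ‖Bm‖ ≤ b0 := by rw [hb0def]; linarith
  have hεnn : 0 ≤ K1 / μ := div_nonneg hK10 hμ0.le
  have hpowdiff := pf_pow_sub_pow h1C hb01 hTsn hBmn hTsBm hεnn k
  -- bound on C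
  have hCn : ‖Cmat L Q A μ‖ ≤ μ * (‖bC‖ + ‖uC‖) := by
    rw [hCbc]
    have h8 : ‖bC - (μ:ℂ) • uC‖ ≤ ‖bC‖ + ‖(μ:ℂ) • uC‖ := norm_sub_le _ _
    have h8' : ‖(μ:ℂ) • uC‖ = μ * ‖uC‖ := by
      rw [norm_smul, Complex.norm_real, Real.norm_eq_abs, abs_of_pos hμ0]
    nlinarith [norm_nonneg bC, norm_nonneg uC]
  -- bound on the CGC factor
  have hm1 : ‖TCFmat L TCQ TCA *
      (↑wT⁻¹ : Matrix (Fin L × Fin M' × Fin N') (Fin L × Fin M' × Fin N') ℂ)‖ ≤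
      ‖TCFmat L TCQ TCA‖ * (2 * ‖uTi‖ / μ) :=
    le_trans (Matrix.l2_opNorm_mul _ _) (mul_le_mul_of_nonneg_left hwTinv (norm_nonneg _))
  have hm2 : ‖TFCmat L TFQ TFA * Cmat L Q A μ‖ ≤
      ‖TFCmat L TFQ TFA‖ * (μ * (‖bC‖ + ‖uC‖)) :=
    le_trans (Matrix.l2_opNorm_mul _ _) (mul_le_mul_of_nonneg_left hCn (norm_nonneg _))
  have hprod : ‖TCFmat L TCQ TCA *
      (↑wT⁻¹ : Matrix (Fin L × Fin M' × Fin N') (Fin L × Fin M' × Fin N') ℂ) *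
      TFCmat L TFQ TFA * Cmat L Q A μ‖ ≤ g - 1 := by
    rw [Matrix.mul_assoc]
    have hnn4 : (0:ℝ) ≤ ‖TCFmat L TCQ TCA‖ * (2 * ‖uTi‖ / μ) :=
      mul_nonneg (norm_nonneg _)
        (div_nonneg (mul_nonneg (by norm_num) (norm_nonneg _)) hμ0.le)
    have h6 : ‖(TCFmat L TCQ TCA *
        (↑wT⁻¹ : Matrix (Fin L × Fin M' × Fin N') (Fin L × Fin M' × Fin N') ℂ)) *
        (TFCmat L TFQ TFA * Cmat L Q A μ)‖ ≤
        (‖TCFmat L TCQ TCA‖ * (2 * ‖uTi‖ / μ)) *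
          (‖TFCmat L TFQ TFA‖ * (μ * (‖bC‖ + ‖uC‖))) :=
      le_trans (Matrix.l2_opNorm_mul _ _) (mul_le_mul hm1 hm2 (norm_nonneg _) hnn4)
    have h7 : (‖TCFmat L TCQ TCA‖ * (2 * ‖uTi‖ / μ)) *
        (‖TFCmat L TFQ TFA‖ * (μ * (‖bC‖ + ‖uC‖))) = g - 1 := by
      rw [hgdef]
      field_simp
      ring
    linarith
  have hGn : ‖(1 : Matrix (Fin L × Fin M × Fin N) (Fin L × Fin M × Fin N) ℂ) -
      TCFmat L TCQ TCA *
        (↑wT⁻¹ : Matrix (Fin L × Fin M' × Fin N') (Fin L × Fin M' × Fin N') ℂ) *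
        TFCmat L TFQ TFA * Cmat L Q A μ‖ ≤ g :=
    le_trans (norm_sub_le _ _) (by linarith)
  -- reassembly
  have hfinal : ((Cmat L Q A μ)⁻¹ -
        TCFmat L TCQ TCA * (Ptilde L QΔt At μ)⁻¹ * TFCmat L TFQ TFA) *
      Cmat L Q A μ * Tsmooth L Q QΔ A μ ^ k =
      ((1 : Matrix (Fin L × Fin M × Fin N) (Fin L × Fin M × Fin N) ℂ) -
        TCFmat L TCQ TCA *
          (↑wT⁻¹ : Matrix (Fin L × Fin M' × Fin N') (Fin L × Fin M' × Fin N') ℂ) *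
          TFCmat L TFQ TFA * Cmat L Q A μ) * Tsmooth L Q QΔ A μ ^ k := by
    rw [hTinv, Matrix.sub_mul, Matrix.nonsing_inv_mul _ hCd]
  have hBmk : ((1 : Matrix (Fin L) (Fin L) ℂ) ⊗ₖ
      (cmplx (((1 : Matrix (Fin M) (Fin M) ℝ) - QΔ⁻¹ * Q) ^ k) ⊗ₖ
        (1 : Matrix (Fin N) (Fin N) ℂ))) = Bm ^ k := by
    rw [hBmdef, cmplx_pow, kron3_pow]
  have hTsk : ‖Tsmooth L Q QΔ A μ ^ k‖ ≤ ‖Bm ^ k‖ + ↑k * b0 ^ k * (K1 / μ) := by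
    have hh : Tsmooth L Q QΔ A μ ^ k = Bm ^ k + (Tsmooth L Q QΔ A μ ^ k - Bm ^ k) := by abel
    have h9 : ‖Tsmooth L Q QΔ A μ ^ k‖ ≤ ‖Bm ^ k‖ + ‖Tsmooth L Q QΔ A μ ^ k - Bm ^ k‖ := by
      calc ‖Tsmooth L Q QΔ A μ ^ k‖
          = ‖Bm ^ k + (Tsmooth L Q QΔ A μ ^ k - Bm ^ k)‖ := by rw [← hh]
        _ ≤ _ := norm_add_le _ _
    linarith
  have hmain : opNorm (((Cmat L Q A μ)⁻¹ -
        TCFmat L TCQ TCA * (Ptilde L QΔt At μ)⁻¹ * TFCmat L TFQ TFA) *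
      Cmat L Q A μ * Tsmooth L Q QΔ A μ ^ k) ≤
      g * opNorm ((1 : Matrix (Fin L) (Fin L) ℂ) ⊗ₖ
        (cmplx (((1 : Matrix (Fin M) (Fin M) ℝ) - QΔ⁻¹ * Q) ^ k) ⊗ₖ
          (1 : Matrix (Fin N) (Fin N) ℂ))) + (g * (↑k * b0 ^ k * K1) + 1) / μ := by
    rw [hopN, hopN, hfinal, hBmk]
    calc ‖((1 : Matrix (Fin L × Fin M × Fin N) (Fin L × Fin M × Fin N) ℂ) -
          TCFmat L TCQ TCA *
            (↑wT⁻¹ : Matrix (Fin L × Fin M' × Fin N') (Fin L × Fin M' × Fin N') ℂ) *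
            TFCmat L TFQ TFA * Cmat L Q A μ) * Tsmooth L Q QΔ A μ ^ k‖
        ≤ ‖(1 : Matrix (Fin L × Fin M × Fin N) (Fin L × Fin M × Fin N) ℂ) -
            TCFmat L TCQ TCA *
              (↑wT⁻¹ : Matrix (Fin L × Fin M' × Fin N') (Fin L × Fin M' × Fin N') ℂ) *
              TFCmat L TFQ TFA * Cmat L Q A μ‖ * ‖Tsmooth L Q QΔ A μ ^ k‖ := norm_mul_le _ _
      _ ≤ g * ‖Tsmooth L Q QΔ A μ ^ k‖ :=
          mul_le_mul_of_nonneg_right hGn (norm_nonneg _)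
      _ ≤ g * (‖Bm ^ k‖ + ↑k * b0 ^ k * (K1 / μ)) :=
          mul_le_mul_of_nonneg_left hTsk (by linarith)
      _ = g * ‖Bm ^ k‖ + g * (↑k * b0 ^ k * K1) / μ := by
          field_simp
      _ ≤ g * ‖Bm ^ k‖ + (g * (↑k * b0 ^ k * K1) + 1) / μ := by
          have hd1 : g * (↑k * b0 ^ k * K1) / μ ≤ (g * (↑k * b0 ^ k * K1) + 1) / μ :=
            (div_le_div_iff_of_pos_right hμ0).mpr (by linarith)
          linarith
  refine ⟨hCunit, hPunit, hTunit, hmain, ?_⟩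
  intro hnil hMk
  have hzero : ((1 : Matrix (Fin M) (Fin M) ℝ) - QΔ⁻¹ * Q) ^ k = 0 := by
    have hkk : k = M + (k - M) := (Nat.add_sub_cancel' hMk).symm
    rw [hkk, pow_add, hnil, zero_mul]
  have htz : ((1 : Matrix (Fin L) (Fin L) ℂ) ⊗ₖ
      (cmplx (((1 : Matrix (Fin M) (Fin M) ℝ) - QΔ⁻¹ * Q) ^ k) ⊗ₖ
        (1 : Matrix (Fin N) (Fin N) ℂ))) = 0 := by
    rw [hzero, cmplx_zero, Matrix.zero_kronecker, Matrix.kronecker_zero]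
  calc opNorm (((Cmat L Q A μ)⁻¹ -
        TCFmat L TCQ TCA * (Ptilde L QΔt At μ)⁻¹ * TFCmat L TFQ TFA) *
      Cmat L Q A μ * Tsmooth L Q QΔ A μ ^ k)
      ≤ g * opNorm ((1 : Matrix (Fin L) (Fin L) ℂ) ⊗ₖ
          (cmplx (((1 : Matrix (Fin M) (Fin M) ℝ) - QΔ⁻¹ * Q) ^ k) ⊗ₖ
            (1 : Matrix (Fin N) (Fin N) ℂ))) + (g * (↑k * b0 ^ k * K1) + 1) / μ := hmain
    _ = (g * (↑k * b0 ^ k * K1) + 1) / μ := by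
        rw [htz, hopN, norm_zero, mul_zero, zero_add]
end
end

section
/- (Smoothing property of the damped smoother via Reusken's Lemma.) Define the damped preconditioner P̂₂(μ) = I_{LMN} − 2μ (I_L ⊗ Q_Δ ⊗ A) and the damped smoother iteration matrix T₂(μ) = I_{LMN} − P̂₂(μ)^{-1} C(μ). Assume Q_Δ and A are invertible and that ‖ I_L ⊗ (I_M − Q_Δ^{-1} Q) ⊗ I_N ‖ < 1. Then there exist constants c > 0 and μ* > 0 such that for all μ ≥ μ* and all integers k ≥ 1, P̂₂(μ) is invertible and ‖ C(μ) · T₂(μ)^k ‖ ≤ c · √(8/(kπ)) · μ. -/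
/-!
STATEMENT 17 (Smoothing property of the damped smoother via Reusken's Lemma):
With P̂₂(μ) = I − 2μ (I_L ⊗ Q_Δ ⊗ A) and T₂(μ) = I − P̂₂(μ)⁻¹ C(μ), assume Q_Δ and
A are invertible and ‖I_L ⊗ (I_M − Q_Δ⁻¹Q) ⊗ I_N‖ < 1. Then there exist c > 0 and
μ* > 0 such that for all μ ≥ μ* and all k ≥ 1, P̂₂(μ) is invertible and
‖ C(μ) · T₂(μ)^k ‖ ≤ c · √(8/(kπ)) · μ.
-/

noncomputable section

open Matrix
open scoped Kronecker

/-- The damped block Jacobi preconditioner `P̂₂(μ) = I − 2μ (I_L ⊗ Q_Δ ⊗ A)`. -/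
def Phat2 (L : ℕ) {M N : ℕ} (QΔ : Matrix (Fin M) (Fin M) ℝ) (A : Matrix (Fin N) (Fin N) ℂ)
    (μ : ℝ) : Matrix (Fin L × Fin M × Fin N) (Fin L × Fin M × Fin N) ℂ :=
  1 - ((2 * μ : ℝ) : ℂ) • ((1 : Matrix (Fin L) (Fin L) ℂ) ⊗ₖ (cmplx QΔ ⊗ₖ A))

/-- The damped smoother iteration matrix `T₂(μ) = I − P̂₂(μ)⁻¹ C(μ)`. -/
def Tdamped (L : ℕ) {M N : ℕ} (Q QΔ : Matrix (Fin M) (Fin M) ℝ)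
    (A : Matrix (Fin N) (Fin N) ℂ) (μ : ℝ) :
    Matrix (Fin L × Fin M × Fin N) (Fin L × Fin M × Fin N) ℂ :=
  1 - (Phat2 L QΔ A μ)⁻¹ * Cmat L Q A μ

/-!
Write `B(μ) = I − 2 P̂₂(μ)⁻¹ C(μ)`. Then `C = ½ P̂₂ (I − B)` and `T₂ = ½ (I + B)`, so
`C T₂^k = 2^{-(k+1)} P̂₂ (I − B)(I + B)^k`. The binomial coefficients of `(1 − x)(1 + x)^k` are
`C(k, j) − C(k, j − 1)`; since `j ↦ C(k, j)` is unimodal their absolute values sum to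
`2 C(k, ⌊k/2⌋) ≤ 2^{k+1} / √(k+1)`. Hence `‖C T₂^k‖ ≤ ‖P̂₂‖ / √(k+1)` as soon as `‖B‖ ≤ 1`
(Reusken's lemma). As `μ → ∞`, `B(μ) → I − (I ⊗ Q_Δ ⊗ A)⁻¹ (I ⊗ Q ⊗ A) = I ⊗ (I − Q_Δ⁻¹ Q) ⊗ I`,
whose norm is `< 1`; so `‖B(μ)‖ < 1` for large `μ`, while `‖P̂₂(μ)‖ = O(μ)`.
-/

open Finset Filter Topology

theorem sum_range_abs_succ_sub_of_unimodal {α : Type*} [AddCommGroup α] [LinearOrder α]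
    [IsOrderedAddMonoid α] {f : ℕ → α} {m n : ℕ} (hmn : m ≤ n)
    (hup : ∀ j < m, f j ≤ f (j + 1)) (hdown : ∀ j, m ≤ j → j < n → f (j + 1) ≤ f j) :
    ∑ j ∈ range n, |f (j + 1) - f j| = (f m - f 0) + (f m - f n) := by
  rw [← sum_range_add_sum_Ico _ hmn]
  congr 1
  · rw [← sum_range_sub f m]
    exact sum_congr rfl fun j hj => abs_of_nonneg (sub_nonneg.2 (hup j (mem_range.1 hj)))
  · rw [← neg_sub (f n), ← sum_Ico_sub f hmn, ← sum_neg_distrib]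
    refine sum_congr rfl fun j hj => ?_
    obtain ⟨hmj, hjn⟩ := mem_Ico.1 hj
    exact abs_of_nonpos (sub_nonpos.2 (hdown j hmj hjn))

namespace Nat

theorem choose_succ_le_choose_of_half_le {k j : ℕ} (h : k / 2 ≤ j) :
    k.choose (j + 1) ≤ k.choose j := by
  refine Nat.le_of_mul_le_mul_right ?_ j.succ_pos
  rw [choose_succ_right_eq]
  exact Nat.mul_le_mul_left _ (by omega)

theorem sum_range_abs_choose_succ_sub_choose (k : ℕ) :
    ∑ j ∈ range (k + 1), |(k.choose (j + 1) : ℤ) - k.choose j| = 2 * k.choose (k / 2) - 1 := by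
  rw [sum_range_abs_succ_sub_of_unimodal (f := fun j => (k.choose j : ℤ)) (m := k / 2) (by omega)
    (fun j hj => by exact_mod_cast choose_le_succ_of_lt_half_left hj)
    (fun j hj _ => by exact_mod_cast choose_succ_le_choose_of_half_le hj)]
  simp only [choose_zero_right, choose_succ_self]
  push_cast
  ring

theorem centralBinom_sq_mul_le (n : ℕ) : n.centralBinom ^ 2 * (2 * n + 1) ≤ 16 ^ n := by
  induction n with
  | zero => simp
  | succ n ih =>
    refine Nat.le_of_mul_le_mul_left ?_ (by positivity : 0 < (n + 1) ^ 2)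
    calc (n + 1) ^ 2 * ((n + 1).centralBinom ^ 2 * (2 * (n + 1) + 1))
        = 4 * ((2 * n + 1) * (2 * n + 3)) * (n.centralBinom ^ 2 * (2 * n + 1)) := by
          rw [← mul_assoc, ← mul_pow, succ_mul_centralBinom_succ]; ring
      _ ≤ 4 * (4 * (n + 1) ^ 2) * 16 ^ n := Nat.mul_le_mul (by nlinarith) ih
      _ = (n + 1) ^ 2 * 16 ^ (n + 1) := by ring

theorem choose_half_sq_mul_succ_le (k : ℕ) : k.choose (k / 2) ^ 2 * (k + 1) ≤ 4 ^ k := by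
  obtain ⟨n, rfl | rfl⟩ := k.even_or_odd'
  · rw [Nat.mul_div_cancel_left n two_pos, ← centralBinom_eq_two_mul_choose, pow_mul]
    exact n.centralBinom_sq_mul_le
  · have hmid : 2 * (2 * n + 1).choose n = (n + 1).centralBinom := by
      rw [centralBinom_eq_two_mul_choose, Nat.mul_succ, choose_succ_succ, choose_symm_half]
      ring
    rw [show (2 * n + 1) / 2 = n by omega]
    refine Nat.le_of_mul_le_mul_left ?_ (by norm_num : 0 < 4)
    calc 4 * ((2 * n + 1).choose n ^ 2 * (2 * n + 1 + 1))
        ≤ (n + 1).centralBinom ^ 2 * (2 * (n + 1) + 1) := by rw [← hmid]; nlinarith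
      _ ≤ 16 ^ (n + 1) := (n + 1).centralBinom_sq_mul_le
      _ = 4 * 4 ^ (2 * n + 1) := by rw [pow_succ, pow_succ, pow_mul]; ring

theorem choose_half_mul_sqrt_succ_le (k : ℕ) : (k.choose (k / 2) : ℝ) * √(k + 1) ≤ 2 ^ k := by
  have h : ((k.choose (k / 2) : ℝ) * √(k + 1)) ^ 2 ≤ (2 ^ k) ^ 2 :=
    calc ((k.choose (k / 2) : ℝ) * √(k + 1)) ^ 2
        = ((k.choose (k / 2) ^ 2 * (k + 1) : ℕ) : ℝ) := by
          push_cast; rw [mul_pow, Real.sq_sqrt (by positivity)]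
      _ ≤ ((4 ^ k : ℕ) : ℝ) := by exact_mod_cast k.choose_half_sq_mul_succ_le
      _ = (2 ^ k) ^ 2 := by push_cast; rw [← pow_mul, mul_comm, pow_mul]; norm_num
  exact (pow_le_pow_iff_left₀ (by positivity) (by positivity) two_ne_zero).1 h

end Nat

section Reusken

variable {R : Type*}

theorem one_add_pow_eq_sum_choose_zsmul [Ring R] (b : R) (k : ℕ) :
    (1 + b) ^ k = ∑ j ∈ range (k + 1), (k.choose j : ℤ) • b ^ j := by
  rw [add_comm, (Commute.one_right b).add_pow]
  refine sum_congr rfl fun j _ => ?_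
  rw [one_pow, mul_one, natCast_zsmul, nsmul_eq_mul, Nat.cast_comm]

theorem one_sub_mul_one_add_pow [Ring R] (b : R) (k : ℕ) :
    (1 - b) * (1 + b) ^ k =
      1 + ∑ j ∈ range (k + 1), ((k.choose (j + 1) : ℤ) - k.choose j) • b ^ (j + 1) := by
  have hpow := one_add_pow_eq_sum_choose_zsmul b k
  have hshift : (1 + b) ^ k = 1 + ∑ j ∈ range (k + 1), (k.choose (j + 1) : ℤ) • b ^ (j + 1) := by
    rw [hpow, sum_range_succ', sum_range_succ _ k]
    simp [add_comm]
  rw [sub_mul, one_mul]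
  nth_rw 1 [hshift]
  rw [hpow, mul_sum]
  simp only [sub_smul, sum_sub_distrib, mul_smul_comm, ← pow_succ']
  abel

variable [SeminormedRing R]

theorem norm_mul_pow_le_of_norm_le_one (p : R) {b : R} (hb : ‖b‖ ≤ 1) (j : ℕ) :
    ‖p * b ^ j‖ ≤ ‖p‖ := by
  induction j with
  | zero => rw [pow_zero, mul_one]
  | succ j ih =>
    rw [pow_succ, ← mul_assoc]
    exact (norm_mul_le _ _).trans ((mul_le_of_le_one_right (norm_nonneg _) hb).trans ih)

theorem norm_mul_one_sub_mul_one_add_pow_le_choose (p : R) {b : R} (hb : ‖b‖ ≤ 1) (k : ℕ) :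
    ‖p * ((1 - b) * (1 + b) ^ k)‖ ≤ 2 * k.choose (k / 2) * ‖p‖ := by
  have hcoeff : ∑ j ∈ range (k + 1), ‖(k.choose (j + 1) : ℤ) - k.choose j‖ =
      2 * (k.choose (k / 2) : ℝ) - 1 := by
    simp only [Int.norm_eq_abs]
    exact_mod_cast Nat.sum_range_abs_choose_succ_sub_choose k
  rw [one_sub_mul_one_add_pow, mul_add, mul_one, mul_sum]
  calc ‖p + ∑ j ∈ range (k + 1), p * (((k.choose (j + 1) : ℤ) - k.choose j) • b ^ (j + 1))‖
      ≤ ‖p‖ + ∑ j ∈ range (k + 1), ‖(k.choose (j + 1) : ℤ) - k.choose j‖ * ‖p‖ := by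
        refine (norm_add_le _ _).trans (add_le_add le_rfl ((norm_sum_le _ _).trans
          (sum_le_sum fun j _ => ?_)))
        rw [mul_smul_comm]
        exact (norm_zsmul_le _ _).trans
          (mul_le_mul_of_nonneg_left (norm_mul_pow_le_of_norm_le_one p hb _) (norm_nonneg _))
    _ = 2 * k.choose (k / 2) * ‖p‖ := by rw [← sum_mul, hcoeff]; ring

theorem norm_mul_one_sub_mul_one_add_pow_mul_sqrt_le (p : R) {b : R} (hb : ‖b‖ ≤ 1) (k : ℕ) :
    ‖p * ((1 - b) * (1 + b) ^ k)‖ * √(k + 1) ≤ 2 ^ (k + 1) * ‖p‖ :=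
  calc ‖p * ((1 - b) * (1 + b) ^ k)‖ * √(k + 1)
      ≤ 2 * k.choose (k / 2) * ‖p‖ * √(k + 1) := by
        gcongr; exact norm_mul_one_sub_mul_one_add_pow_le_choose p hb k
    _ = 2 * (k.choose (k / 2) * √(k + 1)) * ‖p‖ := by ring
    _ ≤ 2 * 2 ^ k * ‖p‖ := by gcongr; exact k.choose_half_mul_sqrt_succ_le
    _ = 2 ^ (k + 1) * ‖p‖ := by ring

end Reusken

section Kronecker

variable {l m n : Type*} [DecidableEq l] [DecidableEq m] [DecidableEq n]

theorem Matrix.one_sub_one_kronecker_kronecker_one {R : Type*} [CommRing R] (X : Matrix m m R) :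
    1 - (1 : Matrix l l R) ⊗ₖ (X ⊗ₖ (1 : Matrix n n R)) =
      (1 : Matrix l l R) ⊗ₖ ((1 - X) ⊗ₖ (1 : Matrix n n R)) := by
  ext ⟨a, b, c⟩ ⟨a', b', c'⟩
  simp only [sub_apply, kroneckerMap_apply, one_apply, Prod.mk.injEq]
  split_ifs <;> simp_all

variable [Fintype l] [Fintype m] [Fintype n]

theorem RingHom.mapMatrix_inv {K L : Type*} [Field K] [Field L] (f : K →+* L)
    (X : Matrix m m K) : f.mapMatrix X⁻¹ = (f.mapMatrix X)⁻¹ := by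
  rw [Matrix.inv_def, Matrix.inv_def, ← RingHom.map_adjugate, ← RingHom.map_det,
    Ring.inverse_eq_inv', Ring.inverse_eq_inv', ← map_inv₀]
  ext i j
  simp

theorem isUnit_cmplx {X : Matrix m m ℝ} (h : IsUnit X) : IsUnit (cmplx X) :=
  h.map Complex.ofRealHom.mapMatrix

theorem cmplx_one_sub_inv_mul (X Y : Matrix m m ℝ) :
    cmplx (1 - X⁻¹ * Y) = 1 - (cmplx X)⁻¹ * cmplx Y := by
  change Complex.ofRealHom.mapMatrix _ = _
  rw [map_sub, map_one, map_mul, RingHom.mapMatrix_inv]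
  rfl

theorem Matrix.inv_one_kronecker_kronecker_mul {R : Type*} [CommRing R] (X Y : Matrix m m R)
    {Z : Matrix n n R} (hZ : IsUnit Z) :
    ((1 : Matrix l l R) ⊗ₖ (X ⊗ₖ Z))⁻¹ * ((1 : Matrix l l R) ⊗ₖ (Y ⊗ₖ Z)) =
      (1 : Matrix l l R) ⊗ₖ ((X⁻¹ * Y) ⊗ₖ (1 : Matrix n n R)) := by
  rw [inv_kronecker, inv_kronecker, inv_one, ← mul_kronecker_mul, ← mul_kronecker_mul, one_mul,
    nonsing_inv_mul _ ((isUnit_iff_isUnit_det Z).1 hZ)]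

end Kronecker

section OpNorm

variable {n : Type*} [Fintype n] [DecidableEq n]

theorem continuous_opNorm : Continuous (opNorm : Matrix n n ℂ → ℝ) :=
  continuous_norm.comp
    (toEuclideanCLM (n := n) (𝕜 := ℂ)).toAlgEquiv.toLinearMap.continuous_of_finiteDimensional

theorem opNorm_one_sub_smul_le (c : ℂ) (X : Matrix n n ℂ) :
    opNorm (1 - c • X) ≤ 1 + ‖c‖ * opNorm X := by
  unfold opNorm
  rw [map_sub, map_one, map_smul]
  exact (norm_sub_le _ _).trans (add_le_add ContinuousLinearMap.norm_id_le (norm_smul _ _).le)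

theorem opNorm_mul_pow_damped_mul_sqrt_le {P C : Matrix n n ℂ} (hP : IsUnit P)
    (hB : opNorm (1 - (2 : ℂ) • (P⁻¹ * C)) ≤ 1) (k : ℕ) :
    opNorm (C * (1 - P⁻¹ * C) ^ k) * √(k + 1) ≤ opNorm P := by
  set B := 1 - (2 : ℂ) • (P⁻¹ * C)
  have hPB : P * (1 - B) = (2 : ℂ) • C := by
    rw [sub_sub_cancel, mul_smul_comm,
      mul_nonsing_inv_cancel_left _ _ ((isUnit_iff_isUnit_det P).1 hP)]
  have hB' : 1 + B = (2 : ℂ) • (1 - P⁻¹ * C) := by simp only [B]; module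
  have hexpand :
      P * ((1 - B) * (1 + B) ^ k) = (2 : ℂ) ^ (k + 1) • (C * (1 - P⁻¹ * C) ^ k) := by
    rw [← mul_assoc, hPB, hB', smul_pow, smul_mul_smul_comm, pow_succ']
  have h := norm_mul_one_sub_mul_one_add_pow_mul_sqrt_le (toEuclideanCLM (𝕜 := ℂ) P) hB k
  rw [← map_one (toEuclideanCLM (𝕜 := ℂ) (n := n)), ← map_sub, ← map_add, ← map_pow,
    ← map_mul, ← map_mul, hexpand, map_smul, norm_smul, norm_pow, RCLike.norm_two, mul_assoc] at h
  exact le_of_mul_le_mul_left h (by positivity)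

theorem eventually_isUnit_and_tendsto_damped {K : Matrix n n ℂ} (hK : IsUnit K)
    (G F : Matrix n n ℂ) :
    (∀ᶠ μ : ℝ in atTop, IsUnit (1 - ((2 * μ : ℝ) : ℂ) • K)) ∧
    Tendsto (fun μ : ℝ => 1 - (2 : ℂ) • ((1 - ((2 * μ : ℝ) : ℂ) • K)⁻¹ * (1 - (μ : ℂ) • G - F)))
      atTop (𝓝 (1 - K⁻¹ * G)) := by
  -- In the variable `t = μ⁻¹` the family extends continuously to `t = 0`.
  set X : ℝ → Matrix n n ℂ := fun t => (t : ℂ) • 1 - (2 : ℂ) • K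
  have hKdet := (isUnit_iff_isUnit_det K).1 hK
  set c : ℂˣ := Units.mk0 (-2) (by norm_num)
  have hX0 : X 0 = c • K := by simp [X, c, Units.smul_def, neg_smul]
  have hX0det : IsUnit (X 0).det := by
    rw [hX0, Units.smul_def, det_smul]
    exact ((Units.isUnit _).pow _).mul hKdet
  have hXc : Continuous X := by fun_prop
  have hXinv : ContinuousAt (fun t => (X t)⁻¹) 0 :=
    (continuousAt_matrix_inv _ (by simpa using NormedRing.inverse_continuousAt hX0det.unit)).comp
      hXc.continuousAt
  have hlim : Tendsto (fun t : ℝ => 1 - (2 : ℂ) • ((X t)⁻¹ * ((t : ℂ) • (1 - F) - G))) (𝓝 0)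
      (𝓝 (1 - K⁻¹ * G)) := by
    have hc : ContinuousAt (fun t : ℝ => 1 - (2 : ℂ) • ((X t)⁻¹ * ((t : ℂ) • (1 - F) - G))) 0 := by
      fun_prop
    convert hc.tendsto using 2
    rw [hX0, inv_smul' K c hKdet]
    simp [c, Units.smul_def]
  have hev : ∀ᶠ μ : ℝ in atTop, 0 < μ ∧ IsUnit (X μ⁻¹).det :=
    (eventually_gt_atTop 0).and (tendsto_inv_atTop_zero.eventually
      ((hXc.matrix_det.continuousAt).eventually_ne hX0det.ne_zero |>.mono fun _ h => h.isUnit))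
  have hP : ∀ μ : ℝ, ∀ hμ : 0 < μ,
      1 - ((2 * μ : ℝ) : ℂ) • K = Units.mk0 (μ : ℂ) (by exact_mod_cast hμ.ne') • X μ⁻¹ := by
    intro μ hμ
    have : (μ : ℂ) ≠ 0 := by exact_mod_cast hμ.ne'
    simp only [X, Units.smul_def, Units.val_mk0]
    match_scalars <;> field_simp
  have hC : ∀ μ : ℝ, ∀ hμ : 0 < μ, 1 - (μ : ℂ) • G - F =
      Units.mk0 (μ : ℂ) (by exact_mod_cast hμ.ne') • (((μ⁻¹ : ℝ) : ℂ) • (1 - F) - G) := by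
    intro μ hμ
    have : (μ : ℂ) ≠ 0 := by exact_mod_cast hμ.ne'
    simp only [Units.smul_def, Units.val_mk0]
    match_scalars <;> field_simp
  constructor
  · filter_upwards [hev] with μ ⟨hμ, hdet⟩
    rw [hP μ hμ]
    exact ((isUnit_iff_isUnit_det _).2 hdet).smul _
  · refine (hlim.comp tendsto_inv_atTop_zero).congr' ?_
    filter_upwards [hev] with μ ⟨hμ, hdet⟩
    rw [Function.comp_apply, hP μ hμ, hC μ hμ, inv_smul' _ _ hdet, smul_mul_smul,
      inv_mul_cancel, one_smul]

end OpNorm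

theorem one_div_sqrt_succ_le_sqrt_eight_div {k : ℕ} (hk : 1 ≤ k) :
    1 / √(k + 1) ≤ √(8 / (k * Real.pi)) := by
  have hk' : (1 : ℝ) ≤ k := by exact_mod_cast hk
  rw [one_div, ← Real.sqrt_inv]
  refine Real.sqrt_le_sqrt ?_
  rw [inv_eq_one_div, div_le_div_iff₀ (by positivity) (by positivity)]
  nlinarith [Real.pi_lt_four]

theorem stmt_17_general (L M N : ℕ)
    (Q QΔ : Matrix (Fin M) (Fin M) ℝ) (A : Matrix (Fin N) (Fin N) ℂ)
    (hQΔ : IsUnit QΔ) (hA : IsUnit A)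
    (hB : opNorm ((1 : Matrix (Fin L) (Fin L) ℂ) ⊗ₖ
        (cmplx ((1 : Matrix (Fin M) (Fin M) ℝ) - QΔ⁻¹ * Q) ⊗ₖ
          (1 : Matrix (Fin N) (Fin N) ℂ))) < 1) :
    ∃ c > (0 : ℝ), ∃ μs > (0 : ℝ), ∀ μ : ℝ, μs ≤ μ → ∀ k : ℕ, 1 ≤ k →
      IsUnit (Phat2 L QΔ A μ) ∧
      opNorm (Cmat L Q A μ * (Tdamped L Q QΔ A μ) ^ k) ≤
        c * Real.sqrt (8 / (k * Real.pi)) * μ := by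
  set K := (1 : Matrix (Fin L) (Fin L) ℂ) ⊗ₖ (cmplx QΔ ⊗ₖ A)
  have hK : IsUnit K := isUnit_one.kronecker ((isUnit_cmplx hQΔ).kronecker hA)
  obtain ⟨hunit, hlim⟩ := eventually_isUnit_and_tendsto_damped hK
    ((1 : Matrix (Fin L) (Fin L) ℂ) ⊗ₖ (cmplx Q ⊗ₖ A)) (EH L M N)
  rw [inv_one_kronecker_kronecker_mul _ _ hA, one_sub_one_kronecker_kronecker_one,
    ← cmplx_one_sub_inv_mul] at hlim
  obtain ⟨μ₀, hμ₀⟩ := eventually_atTop.1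
    (hunit.and ((continuous_opNorm.tendsto _).comp hlim |>.eventually_lt_const hB))
  have hKnorm : 0 ≤ opNorm K := norm_nonneg _
  refine ⟨1 + 2 * opNorm K, by positivity, max μ₀ 1, by positivity, fun μ hμ k hk => ?_⟩
  obtain ⟨hP, hBμ⟩ := hμ₀ μ (le_of_max_le_left hμ)
  have hμ1 : 1 ≤ μ := le_of_max_le_right hμ
  refine ⟨hP, ?_⟩
  have hPnorm : opNorm (Phat2 L QΔ A μ) ≤ (1 + 2 * opNorm K) * μ := by
    refine (opNorm_one_sub_smul_le _ K).trans ?_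
    rw [Complex.norm_real, Real.norm_of_nonneg (by positivity)]
    nlinarith
  calc opNorm (Cmat L Q A μ * Tdamped L Q QΔ A μ ^ k)
      ≤ opNorm (Phat2 L QΔ A μ) * (1 / √(k + 1)) := by
        rw [mul_one_div, le_div_iff₀ (by positivity)]
        exact opNorm_mul_pow_damped_mul_sqrt_le hP hBμ.le k
    _ ≤ (1 + 2 * opNorm K) * μ * √(8 / (k * Real.pi)) := by
        gcongr
        exact one_div_sqrt_succ_le_sqrt_eight_div hk
    _ = (1 + 2 * opNorm K) * √(8 / (k * Real.pi)) * μ := by ring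

theorem stmt_17 (L M N : ℕ) (hL : 0 < L) (hM : 0 < M) (hN : 0 < N)
    (Q QΔ : Matrix (Fin M) (Fin M) ℝ) (A : Matrix (Fin N) (Fin N) ℂ)
    (hQΔ : IsUnit QΔ) (hA : IsUnit A)
    (hB : opNorm ((1 : Matrix (Fin L) (Fin L) ℂ) ⊗ₖ
        (cmplx ((1 : Matrix (Fin M) (Fin M) ℝ) - QΔ⁻¹ * Q) ⊗ₖ
          (1 : Matrix (Fin N) (Fin N) ℂ))) < 1) :
    ∃ c > (0 : ℝ), ∃ μs > (0 : ℝ), ∀ μ : ℝ, μs ≤ μ → ∀ k : ℕ, 1 ≤ k →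
      IsUnit (Phat2 L QΔ A μ) ∧
      opNorm (Cmat L Q A μ * (Tdamped L Q QΔ A μ) ^ k) ≤
        c * Real.sqrt (8 / (k * Real.pi)) * μ :=
  stmt_17_general L M N Q QΔ A hQΔ hA hB
end
end
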